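/- Let v : ℝ × ℝ → ℝ be a smooth function of (x,t) with v_xx(x,t) ≠ 0 for all (x,t), satisfying the evolution equation v_t = −v_x²/v_xx. Define η : ℝ × ℝ → ℝ by η = (27/4)·( v_x³ v_xxx / v_xx³ − v_x² / v_xx ). Then η satisfies the linearized equation ∂η/∂t = ( −2 v_x/v_xx )·∂η/∂x + ( v_x²/v_xx² )·∂²η/∂x² at every point (x,t). -/

import Mathlib

/-- Partial derivative with respect to the first (space) variable. -/
noncomputable def pdx (f : ℝ × ℝ → ℝ) : ℝ × ℝ → ℝ :=
  fun p => deriv (fun x => f (x, p.2)) p.1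

/-- Partial derivative with respect to the second (time) variable. -/
noncomputable def pdt (f : ℝ × ℝ → ℝ) : ℝ × ℝ → ℝ :=
  fun p => deriv (fun t => f (p.1, t)) p.2

/-!
Put `r = v_x / v_xx`. The equation becomes `v_t = -v_x r`, and `r` solves `r_t = r² r_xx`.
The linearized equation is `η_t = -2 r η_x + r² η_xx`. It has the solution `v_x` (translation
in `x`), and since `r (v_x)_x = v_x`, a product `v_x ψ` is a solution as soon as
`ψ_t = r² ψ_xx`. Differentiating `r_t = r² r_xx` shows that `ψ = r r_x` satisfies this, and
`η = -(27/4) v_x r r_x`.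
-/

open scoped ContDiff

theorem ContDiff.differentiable_of_infty {E F : Type*} [NormedAddCommGroup E] [NormedSpace ℝ E]
    [NormedAddCommGroup F] [NormedSpace ℝ F] {f : E → F} (hf : ContDiff ℝ ∞ f) :
    Differentiable ℝ f :=
  hf.differentiable (by simp)

section Calculus

variable {f g : ℝ × ℝ → ℝ}

theorem pdx_add (hf : Differentiable ℝ f) (hg : Differentiable ℝ g) :
    pdx (f + g) = pdx f + pdx g := by
  funext p
  have hx : Differentiable ℝ fun x : ℝ => (x, p.2) :=
    differentiable_id.prodMk (differentiable_const _)
  exact deriv_add ((hf.comp hx) p.1) ((hg.comp hx) p.1)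

theorem pdx_mul (hf : Differentiable ℝ f) (hg : Differentiable ℝ g) :
    pdx (f * g) = pdx f * g + f * pdx g := by
  funext p
  have hx : Differentiable ℝ fun x : ℝ => (x, p.2) :=
    differentiable_id.prodMk (differentiable_const _)
  exact deriv_mul ((hf.comp hx) p.1) ((hg.comp hx) p.1)

theorem pdt_mul (hf : Differentiable ℝ f) (hg : Differentiable ℝ g) :
    pdt (f * g) = pdt f * g + f * pdt g := by
  funext p
  have ht : Differentiable ℝ fun t : ℝ => (p.1, t) :=
    (differentiable_const _).prodMk differentiable_id
  exact deriv_mul ((hf.comp ht) p.2) ((hg.comp ht) p.2)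

theorem pdx_neg (f : ℝ × ℝ → ℝ) : pdx (-f) = -pdx f :=
  funext fun _ => deriv.fun_neg

theorem pdx_const_mul (c : ℝ) (f : ℝ × ℝ → ℝ) :
    pdx (fun p => c * f p) = fun p => c * pdx f p :=
  funext fun _ => deriv_const_mul_field c

theorem pdt_const_mul (c : ℝ) (f : ℝ × ℝ → ℝ) :
    pdt (fun p => c * f p) = fun p => c * pdt f p :=
  funext fun _ => deriv_const_mul_field c

theorem pdx_eq_fderiv (hf : Differentiable ℝ f) : pdx f = fun p => fderiv ℝ f p (1, 0) := by
  funext p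
  have hx : HasDerivAt (fun x : ℝ => (x, p.2)) (1, 0) p.1 :=
    (hasDerivAt_id p.1).prodMk (hasDerivAt_const p.1 p.2)
  exact ((hf p).hasFDerivAt.comp_hasDerivAt p.1 hx).deriv

theorem pdt_eq_fderiv (hf : Differentiable ℝ f) : pdt f = fun p => fderiv ℝ f p (0, 1) := by
  funext p
  have ht : HasDerivAt (fun t : ℝ => (p.1, t)) (0, 1) p.2 :=
    (hasDerivAt_const p.2 p.1).prodMk (hasDerivAt_id p.2)
  exact ((hf p).hasFDerivAt.comp_hasDerivAt p.2 ht).deriv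

theorem ContDiff.pdx (hf : ContDiff ℝ ∞ f) : ContDiff ℝ ∞ (pdx f) := by
  rw [pdx_eq_fderiv hf.differentiable_of_infty]
  exact (hf.fderiv_right le_rfl).clm_apply contDiff_const

theorem fderiv_fderiv_apply (hf : ContDiff ℝ 2 f) (p u w : ℝ × ℝ) :
    fderiv ℝ (fun q => fderiv ℝ f q u) p w = fderiv ℝ (fderiv ℝ f) p w u := by
  have hf' : Differentiable ℝ (fderiv ℝ f) :=
    (hf.fderiv_right (m := 1) (by norm_num)).differentiable one_ne_zero
  rw [fderiv_clm_apply (hf' p) (differentiableAt_const u)]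
  simp

theorem pdt_pdx_comm (hf : ContDiff ℝ 2 f) : pdt (pdx f) = pdx (pdt f) := by
  have hd : Differentiable ℝ f := hf.differentiable (by norm_num)
  have hd' : ∀ u, Differentiable ℝ fun q => fderiv ℝ f q u := fun u =>
    ((hf.fderiv_right (m := 1) (by norm_num)).clm_apply contDiff_const).differentiable one_ne_zero
  funext p
  rw [pdx_eq_fderiv hd, pdt_eq_fderiv hd, pdt_eq_fderiv (hd' _), pdx_eq_fderiv (hd' _)]
  simp only [fderiv_fderiv_apply hf]
  exact hf.contDiffAt.isSymmSndFDerivAt (by simp) _ _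

end Calculus

/-- The linearization of `v_t = -v_x² / v_xx` along `v`, written with `r = v_x / v_xx`. -/
def SolvesLinearized (r η : ℝ × ℝ → ℝ) : Prop :=
  pdt η = -2 * r * pdx η + r ^ 2 * pdx (pdx η)

section Linearized

variable {r a ψ : ℝ × ℝ → ℝ}

theorem SolvesLinearized.mul (ha : SolvesLinearized r a) (hra : r * pdx a = a)
    (hψ : pdt ψ = r ^ 2 * pdx (pdx ψ)) (ha' : ContDiff ℝ ∞ a) (hψ' : ContDiff ℝ ∞ ψ) :
    SolvesLinearized r (a * ψ) := by
  have da := ha'.differentiable_of_infty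
  have dax := ha'.pdx.differentiable_of_infty
  have dψ := hψ'.differentiable_of_infty
  have dψx := hψ'.pdx.differentiable_of_infty
  unfold SolvesLinearized at *
  rw [pdt_mul da dψ, pdx_mul da dψ, pdx_add (dax.mul dψ) (da.mul dψx), pdx_mul dax dψ,
    pdx_mul da dψx, ha, hψ]
  linear_combination (-2 * r * pdx ψ) * hra

theorem SolvesLinearized.const_mul (c : ℝ) {η : ℝ × ℝ → ℝ} (h : SolvesLinearized r η) :
    SolvesLinearized r (fun p => c * η p) := by
  unfold SolvesLinearized at *
  simp only [pdt_const_mul, pdx_const_mul, h]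
  funext p
  simp only [Pi.add_apply, Pi.mul_apply, Pi.pow_apply]
  ring

theorem pdt_mul_pdx_of_pdt_eq (hr : ContDiff ℝ ∞ r) (h : pdt r = r ^ 2 * pdx (pdx r)) :
    pdt (r * pdx r) = r ^ 2 * pdx (pdx (r * pdx r)) := by
  have dr := hr.differentiable_of_infty
  have drx := hr.pdx.differentiable_of_infty
  have drxx := hr.pdx.pdx.differentiable_of_infty
  rw [sq] at h ⊢
  rw [pdt_mul dr drx, pdt_pdx_comm (hr.of_le (WithTop.coe_le_coe.mpr le_top)), h,
    pdx_mul (dr.mul dr) drxx, pdx_mul dr dr, pdx_mul dr drx, pdx_add (drx.mul drx) (dr.mul drxx),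
    pdx_mul drx drx, pdx_mul dr drxx]
  ring

end Linearized

noncomputable def gradRatio (v : ℝ × ℝ → ℝ) : ℝ × ℝ → ℝ :=
  pdx v / pdx (pdx v)

theorem gradRatio_apply (v : ℝ × ℝ → ℝ) (p : ℝ × ℝ) :
    gradRatio v p = pdx v p / pdx (pdx v) p :=
  rfl

section Equation

variable {v : ℝ × ℝ → ℝ}

theorem contDiff_gradRatio (hv : ContDiff ℝ ∞ v) (hvxx : ∀ p, pdx (pdx v) p ≠ 0) :
    ContDiff ℝ ∞ (gradRatio v) :=
  hv.pdx.div hv.pdx.pdx hvxx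

theorem gradRatio_mul_pdx_pdx (hvxx : ∀ p, pdx (pdx v) p ≠ 0) :
    gradRatio v * pdx (pdx v) = pdx v :=
  funext fun p => div_mul_cancel₀ _ (hvxx p)

theorem pdx_gradRatio_mul_add (hv : ContDiff ℝ ∞ v) (hvxx : ∀ p, pdx (pdx v) p ≠ 0) :
    pdx (gradRatio v) * pdx (pdx v) + gradRatio v * pdx (pdx (pdx v)) = pdx (pdx v) := by
  rw [← pdx_mul (contDiff_gradRatio hv hvxx).differentiable_of_infty
    hv.pdx.pdx.differentiable_of_infty, gradRatio_mul_pdx_pdx hvxx]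

theorem pdt_eq_neg_mul_gradRatio (heq : ∀ p, pdt v p = -(pdx v p) ^ 2 / pdx (pdx v) p) :
    pdt v = -(pdx v * gradRatio v) := by
  funext p
  rw [heq p, Pi.neg_apply, Pi.mul_apply, gradRatio_apply]
  ring

theorem pdt_pdx_eq (hv : ContDiff ℝ ∞ v) (hvxx : ∀ p, pdx (pdx v) p ≠ 0)
    (heq : ∀ p, pdt v p = -(pdx v p) ^ 2 / pdx (pdx v) p) :
    pdt (pdx v) = -(pdx (pdx v) * gradRatio v + pdx v * pdx (gradRatio v)) := by
  rw [pdt_pdx_comm (hv.of_le (WithTop.coe_le_coe.mpr le_top)), pdt_eq_neg_mul_gradRatio heq,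
    pdx_neg, pdx_mul hv.pdx.differentiable_of_infty
      (contDiff_gradRatio hv hvxx).differentiable_of_infty]

theorem solvesLinearized_pdx (hv : ContDiff ℝ ∞ v) (hvxx : ∀ p, pdx (pdx v) p ≠ 0)
    (heq : ∀ p, pdt v p = -(pdx v p) ^ 2 / pdx (pdx v) p) :
    SolvesLinearized (gradRatio v) (pdx v) := by
  unfold SolvesLinearized
  rw [pdt_pdx_eq hv hvxx heq]
  linear_combination pdx (gradRatio v) * gradRatio_mul_pdx_pdx hvxx
    - gradRatio v * pdx_gradRatio_mul_add hv hvxx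

theorem pdt_gradRatio (hv : ContDiff ℝ ∞ v) (hvxx : ∀ p, pdx (pdx v) p ≠ 0)
    (heq : ∀ p, pdt v p = -(pdx v p) ^ 2 / pdx (pdx v) p) :
    pdt (gradRatio v) = gradRatio v ^ 2 * pdx (pdx (gradRatio v)) := by
  have hr := contDiff_gradRatio hv hvxx
  have dr := hr.differentiable_of_infty
  have drx := hr.pdx.differentiable_of_infty
  have dvx := hv.pdx.differentiable_of_infty
  have dvxx := hv.pdx.pdx.differentiable_of_infty
  have hrb := gradRatio_mul_pdx_pdx hvxx
  have hpdt := congrArg pdt hrb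
  rw [pdt_mul dr dvxx, pdt_pdx_comm (hv.pdx.of_le (WithTop.coe_le_coe.mpr le_top)),
    pdt_pdx_eq hv hvxx heq, pdx_neg, pdx_add (dvxx.mul dr) (dvx.mul drx), pdx_mul dvxx dr,
    pdx_mul dvx drx] at hpdt
  have key : pdt (gradRatio v) * pdx (pdx v) =
      gradRatio v ^ 2 * pdx (pdx (gradRatio v)) * pdx (pdx v) := by
    linear_combination hpdt + (pdx (gradRatio v) - gradRatio v * pdx (pdx (gradRatio v))) * hrb
      + gradRatio v * pdx_gradRatio_mul_add hv hvxx
  funext p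
  exact mul_right_cancel₀ (hvxx p) (congrFun key p)

end Equation

/-- Equation (vt-27) of the concluding remarks: for a solution of `v_t = −v_x²/v_xx`,
the function `η = (27/4)( v_x³ v_xxx / v_xx³ − v_x² / v_xx )` satisfies the linearized
(Lie–Bäcklund symmetry) equation. -/
theorem vt27_third_order_symmetry
    (v : ℝ × ℝ → ℝ) (hv : ContDiff ℝ (⊤ : ℕ∞) v)
    (hvxx : ∀ p : ℝ × ℝ, pdx (pdx v) p ≠ 0)
    (heq : ∀ p : ℝ × ℝ, pdt v p = -(pdx v p) ^ 2 / pdx (pdx v) p)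
    (η : ℝ × ℝ → ℝ)
    (hη : η = fun p =>
      (27 / 4) * ((pdx v p) ^ 3 * pdx (pdx (pdx v)) p / (pdx (pdx v) p) ^ 3
        - (pdx v p) ^ 2 / pdx (pdx v) p)) :
    ∀ p : ℝ × ℝ, pdt η p =
      (-2 * pdx v p / pdx (pdx v) p) * pdx η p
      + ((pdx v p) ^ 2 / (pdx (pdx v) p) ^ 2) * pdx (pdx η) p := by
  have hr : ContDiff ℝ ∞ (gradRatio v) := contDiff_gradRatio hv hvxx
  have hη' : η = fun p => -27 / 4 * (pdx v * (gradRatio v * pdx (gradRatio v))) p := by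
    rw [hη]
    funext p
    have hrx := congrFun (pdx_gradRatio_mul_add hv hvxx) p
    simp only [Pi.add_apply, Pi.mul_apply] at hrx ⊢
    rw [gradRatio_apply] at hrx ⊢
    field_simp [hvxx p] at hrx ⊢
    linear_combination pdx v p ^ 2 * hrx
  have hlin : SolvesLinearized (gradRatio v)
      (fun p => -27 / 4 * (pdx v * (gradRatio v * pdx (gradRatio v))) p) :=
    ((solvesLinearized_pdx hv hvxx heq).mul (gradRatio_mul_pdx_pdx hvxx)
      (pdt_mul_pdx_of_pdt_eq hr (pdt_gradRatio hv hvxx heq)) hv.pdx (hr.mul hr.pdx)).const_mul _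
  intro p
  rw [hη', hlin]
  simp only [Pi.add_apply, Pi.mul_apply, Pi.pow_apply, Pi.neg_apply, Pi.ofNat_apply,
    gradRatio_apply]
  ring
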